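/- arXiv:1612.08637 — 5 statements merged into one kernel-verified Lean document; each statement's English description precedes it below -/
import Mathlib

section
/- Let U, V ⊂ ℝⁿ be 0-symmetric convex bodies, H = (1/2)U, K = V + H (Minkowski sum). If X ⊂ ℝⁿ is a finite set with K ⊆ H + X, then for every continuous non-negative positive definite f : ℝⁿ → ℝ one has ∫_V f(x) dx ≤ |X| ∫_U f(x) dx. -/
/-!
Put `H = ½ • U`. For `v ∈ V` and `s ∈ H` the covering puts `v + s` in some `H + x`, `x ∈ X`, so
integrating over `s ∈ H` and then against `f` over `V` gives, by Tonelli and translation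
invariance, `|H| ∫_V f ≤ ∑_{x ∈ X} G x` with `G x = ∫_{H × H} f (a - b + x)`.

Positive definiteness of `f` makes `y ↦ 2 f y - f (y + x) - f (y - x)` positive definite, and the
double integral of such a kernel over `H × H` is nonnegative: averaging its quadratic form over
`m` independent uniform points of `H`, the `m² - m` off-diagonal terms give the double integral and
the `m` diagonal terms a bounded error. As `f` is even, `G (-x) = G x`, hence `G x ≤ G 0`.
Finally `H - H = U` and `f ≥ 0` give `G 0 ≤ |H| ∫_U f`.
-/

open MeasureTheory Complex Pointwise

noncomputable section

/-- A continuous-type positive definiteness condition for complex-valued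
functions on `ℝⁿ`: all finite quadratic forms are real and nonnegative. -/
def IsPosDefC {n : ℕ} (f : (Fin n → ℝ) → ℂ) : Prop :=
  ∀ (X : Finset (Fin n → ℝ)) (c : (Fin n → ℝ) → ℂ),
    0 ≤ (∑ a ∈ X, ∑ b ∈ X, c a * (starRingEnd ℂ) (c b) * f (a - b)).re ∧
    (∑ a ∈ X, ∑ b ∈ X, c a * (starRingEnd ℂ) (c b) * f (a - b)).im = 0

/-- Positive definiteness for real-valued functions on `ℝⁿ`. -/
def IsPosDefR {n : ℕ} (f : (Fin n → ℝ) → ℝ) : Prop :=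
  IsPosDefC (fun x => (f x : ℂ))

/-- The set of ratios `(|V|⁻¹ ∫_V f) / (|U|⁻¹ ∫_U f)` over nonzero continuous
non-negative positive definite `f`. -/
def ratioSet (n : ℕ) (U V : Set (Fin n → ℝ)) : Set ℝ :=
  { c | ∃ f : (Fin n → ℝ) → ℝ, Continuous f ∧ (∀ x, 0 ≤ f x) ∧ IsPosDefR f ∧
      f ≠ 0 ∧ 0 < ∫ x in U, f x ∧
      c = ((volume V).toReal⁻¹ * ∫ x in V, f x) /
          ((volume U).toReal⁻¹ * ∫ x in U, f x) }

/-- The sharp constant `C_n(U,V)` in the doubling-type condition at the origin. -/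
def doublingConst (n : ℕ) (U V : Set (Fin n → ℝ)) : ℝ := sSup (ratioSet n U V)

/-- A `0`-symmetric convex body in `ℝⁿ`. -/
def IsSymConvexBody {n : ℕ} (U : Set (Fin n → ℝ)) : Prop :=
  Convex ℝ U ∧ IsCompact U ∧ (interior U).Nonempty ∧ U = -U

namespace IsPosDefR

variable {n : ℕ} {f : (Fin n → ℝ) → ℝ}

theorem sum_sum_mul_nonneg (hf : IsPosDefR f) {ι : Type*} [Fintype ι] (p : ι → Fin n → ℝ)
    (w : ι → ℝ) : 0 ≤ ∑ i, ∑ j, w i * w j * f (p i - p j) := by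
  classical
  set c : (Fin n → ℝ) → ℂ := fun a => ∑ i, if p i = a then (w i : ℂ) else 0
  have hc : ∀ g : (Fin n → ℝ) → ℂ,
      ∑ a ∈ Finset.univ.image p, c a * g a = ∑ i, w i * g (p i) := by
    intro g
    simp only [c, Finset.sum_mul, ite_mul, zero_mul]
    rw [Finset.sum_comm]
    exact Finset.sum_congr rfl fun i _ => by
      rw [Finset.sum_ite_eq, if_pos (Finset.mem_image_of_mem p (Finset.mem_univ i))]
  have hconj : ∀ a, (starRingEnd ℂ) (c a) = c a := fun a => by
    simp only [c, map_sum, apply_ite (starRingEnd ℂ), Complex.conj_ofReal, map_zero]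
  have h := (hf (Finset.univ.image p) c).1
  simp only [hconj, mul_assoc, ← Finset.mul_sum] at h
  simp only [hc] at h
  norm_cast at h
  simpa only [Complex.ofReal_re, Finset.mul_sum, mul_assoc] using h

theorem apply_neg (hf : IsPosDefR f) (y : Fin n → ℝ) : f (-y) = f y := by
  rcases eq_or_ne y 0 with rfl | hy
  · simp
  have h := (hf {0, y} fun p => if p = 0 then 1 else I).2
  simp only [Finset.sum_pair hy.symm, if_pos, if_neg hy, sub_self, sub_zero, zero_sub, map_one,
    Complex.conj_I, mul_one, one_mul, mul_neg, neg_mul, I_mul_I, neg_neg, add_im, ofReal_im,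
    neg_im, mul_im, I_re, mul_zero, I_im, ofReal_re, zero_add, add_zero] at h
  linarith

theorem abs_le_apply_zero (hf : IsPosDefR f) (y : Fin n → ℝ) : |f y| ≤ f 0 := by
  have h₁ := hf.sum_sum_mul_nonneg ![0, y] ![1, 1]
  have h₂ := hf.sum_sum_mul_nonneg ![0, y] ![1, -1]
  simp only [Fin.sum_univ_two, Matrix.cons_val_zero, Matrix.cons_val_one, sub_self, sub_zero,
    zero_sub, hf.apply_neg] at h₁ h₂
  rw [abs_le]
  constructor <;> linarith

theorem sum_sum_second_diff_nonneg (hf : IsPosDefR f) (x : Fin n → ℝ) {m : ℕ}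
    (s : Fin m → Fin n → ℝ) :
    0 ≤ ∑ k, ∑ l, (2 * f (s k - s l) - f (s k - s l + x) - f (s k - s l - x)) := by
  have h := hf.sum_sum_mul_nonneg (Sum.elim s (s · + x)) (Sum.elim 1 (-1))
  simp only [Fintype.sum_sum_type, Sum.elim_inl, Sum.elim_inr] at h
  convert h using 1
  simp only [← Finset.sum_add_distrib]
  refine Finset.sum_congr rfl fun k _ => Finset.sum_congr rfl fun l _ => ?_
  simp only [Pi.one_apply, Pi.neg_apply, add_sub_add_right_eq_sub]
  rw [show s k - (s l + x) = s k - s l - x by abel, show s k + x - s l = s k - s l + x by abel]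
  ring

end IsPosDefR

section Kernel

variable {α : Type*} [MeasurableSpace α] {K : α × α → ℝ}

theorem integral_pi_apply_pair_of_ne {μ : Measure α} [IsProbabilityMeasure μ] {m : ℕ}
    {k l : Fin m} (hkl : k ≠ l) (hK : AEStronglyMeasurable K (μ.prod μ)) :
    ∫ s, K (s k, s l) ∂Measure.pi (fun _ => μ) = ∫ p, K p ∂μ.prod μ := by
  have hind := (ProbabilityTheory.iIndepFun_pi (μ := fun _ : Fin m => μ)
    (X := fun _ => id) fun _ => aemeasurable_id).indepFun hkl
  have hmap := (ProbabilityTheory.indepFun_iff_map_prod_eq_prod_map_map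
    (measurable_pi_apply k).aemeasurable (measurable_pi_apply l).aemeasurable).1 hind
  simp only [(measurePreserving_eval (fun _ : Fin m => μ) _).map_eq] at hmap
  rw [← integral_map ((measurable_pi_apply k).prodMk (measurable_pi_apply l)).aemeasurable
    (hmap ▸ hK), hmap]

theorem integral_pi_apply {μ : Measure α} [IsProbabilityMeasure μ] {m : ℕ} (k : Fin m)
    {g : α → ℝ} (hg : AEStronglyMeasurable g μ) :
    ∫ s, g (s k) ∂Measure.pi (fun _ => μ) = ∫ a, g a ∂μ := by
  have hmap := (measurePreserving_eval (fun _ : Fin m => μ) k).map_eq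
  rw [← integral_map (measurable_pi_apply k).aemeasurable (by rwa [hmap]), hmap]

theorem integral_prod_nonneg_of_sum_sum_nonneg_of_isProbabilityMeasure (μ : Measure α)
    [IsProbabilityMeasure μ] (hK : Measurable K) {C : ℝ} (hC : ∀ p, |K p| ≤ C)
    (hform : ∀ (m : ℕ) (s : Fin m → α), 0 ≤ ∑ k, ∑ l, K (s k, s l)) :
    0 ≤ ∫ p, K p ∂μ.prod μ := by
  set J := ∫ p, K p ∂μ.prod μ
  set D := ∫ a, K (a, a) ∂μ
  have hmean : ∀ m : ℕ, 0 ≤ D + m * J := by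
    intro m
    set P := Measure.pi fun _ : Fin (m + 1) => μ
    have hint : ∀ k l : Fin (m + 1), Integrable (fun s => K (s k, s l)) P := fun k l =>
      .of_bound (hK.comp ((measurable_pi_apply k).prodMk
        (measurable_pi_apply l))).aestronglyMeasurable C (ae_of_all _ fun s => hC _)
    have hrow : ∀ k : Fin (m + 1), ∑ l, ∫ s, K (s k, s l) ∂P = D + m * J := by
      intro k
      rw [Fintype.sum_eq_add_sum_compl k, integral_pi_apply k (g := fun a => K (a, a))
        (hK.comp (measurable_id.prodMk measurable_id)).aestronglyMeasurable,
        Finset.sum_congr rfl fun l hl => integral_pi_apply_pair_of_ne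
          (by simpa [eq_comm] using hl) hK.aestronglyMeasurable]
      simp [Finset.card_compl, D, J]
    refine (mul_nonneg_iff_of_pos_left (by positivity : (0 : ℝ) < m + 1)).1 ?_
    calc 0 ≤ ∫ s, ∑ k, ∑ l, K (s k, s l) ∂P := integral_nonneg fun s => hform _ s
      _ = ∑ k, ∑ l, ∫ s, K (s k, s l) ∂P := by
        rw [integral_finsetSum _ fun k _ => integrable_finsetSum _ fun l _ => hint k l]
        exact Finset.sum_congr rfl fun k _ => integral_finsetSum _ fun l _ => hint k l
      _ = (m + 1) * (D + m * J) := by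
        simp only [hrow, Finset.sum_const, Finset.card_univ, Fintype.card_fin, nsmul_eq_mul,
          Nat.cast_add, Nat.cast_one]
  by_contra! hJ
  obtain ⟨m, hm⟩ := exists_nat_gt (D / -J)
  rw [div_lt_iff₀ (neg_pos.2 hJ)] at hm
  linarith [hmean m]

theorem integral_prod_nonneg_of_sum_sum_nonneg (μ : Measure α) [IsFiniteMeasure μ]
    (hK : Measurable K) {C : ℝ} (hC : ∀ p, |K p| ≤ C)
    (hform : ∀ (m : ℕ) (s : Fin m → α), 0 ≤ ∑ k, ∑ l, K (s k, s l)) :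
    0 ≤ ∫ p, K p ∂μ.prod μ := by
  rcases eq_zero_or_neZero μ with rfl | _
  · simp
  have hμ : μ = μ Set.univ • (μ Set.univ)⁻¹ • μ := by
    rw [smul_smul, ENNReal.mul_inv_cancel (NeZero.ne _) (measure_ne_top _ _), one_smul]
  rw [hμ, Measure.prod_smul_left, Measure.prod_smul_right, integral_smul_measure,
    integral_smul_measure]
  exact smul_nonneg ENNReal.toReal_nonneg <| smul_nonneg ENNReal.toReal_nonneg <|
    integral_prod_nonneg_of_sum_sum_nonneg_of_isProbabilityMeasure _ hK hC hform

end Kernel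

namespace IsPosDefR

variable {n : ℕ} {f : (Fin n → ℝ) → ℝ}

theorem integrable_comp_sub_add (hf : IsPosDefR f) (hc : Continuous f)
    {μ : Measure ((Fin n → ℝ) × (Fin n → ℝ))} [IsFiniteMeasure μ] (z : Fin n → ℝ) :
    Integrable (fun p => f (p.1 - p.2 + z)) μ :=
  .of_bound (by fun_prop : Continuous fun p : (Fin n → ℝ) × (Fin n → ℝ) =>
    f (p.1 - p.2 + z)).aestronglyMeasurable (f 0) (ae_of_all _ fun _ => hf.abs_le_apply_zero _)

theorem setIntegral_prod_sub_add_le (hf : IsPosDefR f) (hc : Continuous f)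
    {H : Set (Fin n → ℝ)} (hH : volume H ≠ ⊤) (x : Fin n → ℝ) :
    ∫ p in H ×ˢ H, f (p.1 - p.2 + x) ∂volume.prod volume ≤
      ∫ p in H ×ˢ H, f (p.1 - p.2) ∂volume.prod volume := by
  set μ := volume.restrict H
  have : IsFiniteMeasure μ := isFiniteMeasure_restrict.2 hH
  rw [← Measure.prod_restrict]
  have hint := hf.integrable_comp_sub_add hc (μ := μ.prod μ)
  have hswap : ∫ p, f (p.1 - p.2 + -x) ∂μ.prod μ = ∫ p, f (p.1 - p.2 + x) ∂μ.prod μ := by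
    rw [← integral_prod_swap]
    refine integral_congr_ae (ae_of_all _ fun p => ?_)
    change f (p.2 - p.1 + -x) = f (p.1 - p.2 + x)
    rw [← hf.apply_neg]
    abel_nf
  -- the shifts `+ 0` and `+ -x` make all three terms instances of `hint`
  have hker := integral_prod_nonneg_of_sum_sum_nonneg μ
    (K := fun p => 2 * f (p.1 - p.2 + 0) - f (p.1 - p.2 + x) - f (p.1 - p.2 + -x))
    (by fun_prop) (C := 4 * f 0)
    (fun p => by
      have := hf.abs_le_apply_zero (p.1 - p.2 + 0)
      have := hf.abs_le_apply_zero (p.1 - p.2 + x)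
      have := hf.abs_le_apply_zero (p.1 - p.2 + -x)
      rw [abs_le] at *
      constructor <;> linarith)
    (fun m s => by simpa [← sub_eq_add_neg] using hf.sum_sum_second_diff_nonneg x s)
  rw [integral_sub ?_ (hint (-x)), integral_sub ((hint 0).const_mul 2) (hint x),
    integral_const_mul, hswap] at hker
  · simp only [add_zero] at hker
    linarith
  · exact ((hint 0).const_mul 2).sub (hint x)

theorem setLIntegral_prod_sub_add_le (hf : IsPosDefR f) (hc : Continuous f) (hnn : ∀ x, 0 ≤ f x)
    {H : Set (Fin n → ℝ)} (hH : volume H ≠ ⊤) (x : Fin n → ℝ) :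
    ∫⁻ p in H ×ˢ H, ENNReal.ofReal (f (p.1 - p.2 + x)) ∂volume.prod volume ≤
      ∫⁻ p in H ×ˢ H, ENNReal.ofReal (f (p.1 - p.2)) ∂volume.prod volume := by
  have := isFiniteMeasure_restrict.2 hH
  have : IsFiniteMeasure ((volume.prod volume).restrict (H ×ˢ H)) := by
    rw [← Measure.prod_restrict]; infer_instance
  have hint := hf.integrable_comp_sub_add hc (μ := (volume.prod volume).restrict (H ×ˢ H))
  calc ∫⁻ p in H ×ˢ H, ENNReal.ofReal (f (p.1 - p.2 + x)) ∂volume.prod volume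
      = ENNReal.ofReal (∫ p in H ×ˢ H, f (p.1 - p.2 + x) ∂volume.prod volume) :=
        (ofReal_integral_eq_lintegral_ofReal (hint x) (ae_of_all _ fun _ => hnn _)).symm
    _ ≤ ENNReal.ofReal (∫ p in H ×ˢ H, f (p.1 - p.2) ∂volume.prod volume) :=
        ENNReal.ofReal_le_ofReal (hf.setIntegral_prod_sub_add_le hc hH x)
    _ = ∫⁻ p in H ×ˢ H, ENNReal.ofReal (f (p.1 - p.2)) ∂volume.prod volume :=
        ofReal_integral_eq_lintegral_ofReal (by simpa using hint 0) (ae_of_all _ fun _ => hnn _)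

end IsPosDefR

section Covering

open scoped ENNReal

variable {G : Type*} [AddCommGroup G] [MeasurableSpace G] {μ : Measure G} [μ.IsAddRightInvariant]
  {H : Set G} {F : G → ℝ≥0∞}

theorem lintegral_indicator_add_sub_mul [MeasurableAdd G] (hH : MeasurableSet H) (s x : G) :
    ∫⁻ v, H.indicator 1 (v + s - x) * F v ∂μ = ∫⁻ t in H, F (t - s + x) ∂μ := by
  rw [← lintegral_add_right_eq_self _ (x - s), ← lintegral_indicator hH]
  congr 1 with t
  rw [show t + (x - s) + s - x = t by abel, show t + (x - s) = t - s + x by abel]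
  by_cases ht : t ∈ H <;> simp [ht]

variable [MeasurableAdd₂ G] [MeasurableNeg G] [SFinite μ]

theorem mul_setLIntegral_le_sum_setLIntegral_prod {V : Set G} {X : Finset G}
    (hH : MeasurableSet H) (hV : MeasurableSet V) (hcov : V + H ⊆ H + X) (hF : Measurable F) :
    μ H * ∫⁻ v in V, F v ∂μ ≤ ∑ x ∈ X, ∫⁻ p in H ×ˢ H, F (p.1 - p.2 + x) ∂μ.prod μ := by
  have hmeas : ∀ x : G, Measurable fun p : G × G => H.indicator 1 (p.1 + p.2 - x) * F p.1 :=
    fun x => ((measurable_one.indicator hH).comp (by fun_prop)).mul (hF.comp measurable_fst)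
  have hcover : ∀ v ∈ V, ∀ s ∈ H, F v ≤ ∑ x ∈ X, H.indicator 1 (v + s - x) * F v := by
    intro v hv s hs
    obtain ⟨h, hh, x, hx, hsum⟩ := hcov (Set.add_mem_add hv hs)
    calc F v = H.indicator 1 (v + s - x) * F v := by
          rw [← hsum, add_sub_cancel_right, Set.indicator_of_mem hh, Pi.one_apply, one_mul]
      _ ≤ _ := Finset.single_le_sum (f := fun x => H.indicator 1 (v + s - x) * F v)
          (fun _ _ => zero_le) hx
  calc μ H * ∫⁻ v in V, F v ∂μ = ∫⁻ v in V, ∫⁻ _ in H, F v ∂μ ∂μ := by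
        simp_rw [setLIntegral_const]
        rw [lintegral_mul_const _ hF, mul_comm]
    _ ≤ ∫⁻ v in V, ∑ x ∈ X, ∫⁻ s in H, H.indicator 1 (v + s - x) * F v ∂μ ∂μ :=
        setLIntegral_mono' hV fun v hv => (setLIntegral_mono' hH (hcover v hv)).trans_eq
          (lintegral_finsetSum _ fun x _ => (hmeas x).comp measurable_prodMk_left)
    _ ≤ ∑ x ∈ X, ∫⁻ v, ∫⁻ s in H, H.indicator 1 (v + s - x) * F v ∂μ ∂μ :=
        (setLIntegral_le_lintegral _ _).trans_eq
          (lintegral_finsetSum _ fun x _ => (hmeas x).lintegral_prod_right')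
    _ = ∑ x ∈ X, ∫⁻ s in H, ∫⁻ t in H, F (t - s + x) ∂μ ∂μ := by
        refine Finset.sum_congr rfl fun x _ => ?_
        rw [lintegral_lintegral_swap (hmeas x).aemeasurable]
        simp_rw [lintegral_indicator_add_sub_mul hH]
    _ = ∑ x ∈ X, ∫⁻ p in H ×ˢ H, F (p.1 - p.2 + x) ∂μ.prod μ := by
        simp_rw [← Measure.prod_restrict]
        refine Finset.sum_congr rfl fun x _ =>
          (lintegral_prod_symm (fun p : G × G => F (p.1 - p.2 + x)) ?_).symm
        exact (hF.comp (by fun_prop)).aemeasurable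

theorem setLIntegral_prod_sub_le_mul_setLIntegral {U : Set G} (hH : MeasurableSet H)
    (hHU : H - H ⊆ U) (hF : Measurable F) :
    ∫⁻ p in H ×ˢ H, F (p.1 - p.2) ∂μ.prod μ ≤ μ H * ∫⁻ u in U, F u ∂μ := by
  rw [← Measure.prod_restrict,
    lintegral_prod_symm (fun p : G × G => F (p.1 - p.2)) (hF.comp (by fun_prop)).aemeasurable]
  calc ∫⁻ s in H, ∫⁻ t in H, F (t - s) ∂μ ∂μ ≤ ∫⁻ _ in H, ∫⁻ u in U, F u ∂μ ∂μ := by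
        refine setLIntegral_mono' hH fun s hs => ?_
        have h := lintegral_indicator_add_sub_mul (μ := μ) (F := F) hH s 0
        simp only [sub_zero, add_zero] at h
        rw [← h]
        refine (lintegral_mono fun v => ?_).trans (lintegral_indicator_le F U)
        by_cases hv : v + s ∈ H
        · have hvU : v ∈ U := by simpa using hHU (Set.sub_mem_sub hv hs)
          simp [hv, hvU]
        · simp [hv]
    _ = μ H * ∫⁻ u in U, F u ∂μ := by rw [setLIntegral_const, mul_comm]

end Covering

theorem Convex.inv_two_smul_sub_inv_two_smul {E : Type*} [AddCommGroup E] [Module ℝ E]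
    {U : Set E} (hU : Convex ℝ U) (hsymm : U = -U) : (2 : ℝ)⁻¹ • U - (2 : ℝ)⁻¹ • U = U := by
  rw [sub_eq_add_neg, ← Set.smul_set_neg, ← hsymm, ← hU.add_smul (by norm_num) (by norm_num)]
  norm_num

/-- Covering theorem: if `K = V + H ⊆ H + X` with `H = (1/2)U`, then
`∫_V f ≤ |X| ∫_U f` for every non-negative positive definite `f`. -/
theorem covering_integral_bound {n : ℕ} (U V : Set (Fin n → ℝ))
    (hU : IsSymConvexBody U) (hV : IsSymConvexBody V)
    (X : Finset (Fin n → ℝ))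
    (hcov : V + (2 : ℝ)⁻¹ • U ⊆ (2 : ℝ)⁻¹ • U + (X : Set (Fin n → ℝ)))
    (f : (Fin n → ℝ) → ℝ) (hc : Continuous f) (hnn : ∀ x, 0 ≤ f x)
    (hpd : IsPosDefR f) :
    ∫ x in V, f x ≤ (X.card : ℝ) * ∫ x in U, f x := by
  obtain ⟨hUconv, hUcpt, hUint, hUsymm⟩ := hU
  set H := (2 : ℝ)⁻¹ • U
  have hHcpt : IsCompact H := hUcpt.smul _
  have hH₀ : volume H ≠ 0 := (Measure.measure_pos_of_nonempty_interior _ <| by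
    rw [interior_smul₀ (by norm_num)]; exact hUint.smul_set).ne'
  have hF : Measurable fun x => ENNReal.ofReal (f x) := hc.measurable.ennreal_ofReal
  have key : volume H * ∫⁻ v in V, ENNReal.ofReal (f v) ≤
      volume H * (X.card * ∫⁻ u in U, ENNReal.ofReal (f u)) :=
    calc volume H * ∫⁻ v in V, ENNReal.ofReal (f v)
        ≤ ∑ x ∈ X, ∫⁻ p in H ×ˢ H, ENNReal.ofReal (f (p.1 - p.2 + x)) ∂volume.prod volume :=
          mul_setLIntegral_le_sum_setLIntegral_prod hHcpt.measurableSet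
            hV.2.1.measurableSet hcov hF
      _ ≤ ∑ _x ∈ X, ∫⁻ p in H ×ˢ H, ENNReal.ofReal (f (p.1 - p.2)) ∂volume.prod volume :=
          Finset.sum_le_sum fun x _ =>
            hpd.setLIntegral_prod_sub_add_le hc hnn hHcpt.measure_lt_top.ne x
      _ ≤ X.card * (volume H * ∫⁻ u in U, ENNReal.ofReal (f u)) := by
          rw [Finset.sum_const, nsmul_eq_mul]
          exact mul_le_mul_right (setLIntegral_prod_sub_le_mul_setLIntegral hHcpt.measurableSet
            (hUconv.inv_two_smul_sub_inv_two_smul hUsymm).le hF) _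
      _ = volume H * (X.card * ∫⁻ u in U, ENNReal.ofReal (f u)) := by ring
  have hfU := (hc.continuousOn.integrableOn_compact (μ := volume) hUcpt).lintegral_lt_top
  rw [integral_eq_lintegral_of_nonneg_ae (ae_of_all _ fun _ => hnn _) hc.aestronglyMeasurable,
    integral_eq_lintegral_of_nonneg_ae (ae_of_all _ fun _ => hnn _) hc.aestronglyMeasurable,
    ← ENNReal.toReal_natCast, ← ENNReal.toReal_mul]
  exact ENNReal.toReal_mono (ENNReal.mul_ne_top (ENNReal.natCast_ne_top _) hfU.ne)
    ((ENNReal.mul_le_mul_iff_right hH₀ hHcpt.measure_lt_top.ne).1 key)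
end
end

section
/- For every natural number r ≥ 1 and every continuous non-negative positive definite function f : ℝ → ℝ, one has (1/(2r)) ∫_{-r}^{r} f(x) dx ≤ (2 + 1/r) · (1/2) ∫_{-1}^{1} f(x) dx; equivalently C_1([-1,1],[-r,r]) ≤ 2 + 1/r. -/
open MeasureTheory Complex Pointwise

noncomputable section

/-- Positive definiteness for complex-valued functions on `ℝ`. -/
def IsPosDefC1 (f : ℝ → ℂ) : Prop :=
  ∀ (X : Finset ℝ) (c : ℝ → ℂ),
    0 ≤ (∑ a ∈ X, ∑ b ∈ X, c a * (starRingEnd ℂ) (c b) * f (a - b)).re ∧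
    (∑ a ∈ X, ∑ b ∈ X, c a * (starRingEnd ℂ) (c b) * f (a - b)).im = 0

/-- Positive definiteness for real-valued functions on `ℝ`. -/
def IsPosDefR1 (f : ℝ → ℝ) : Prop :=
  IsPosDefC1 (fun x => (f x : ℂ))

/-- The set of ratios `(|V|⁻¹ ∫_V f) / (|U|⁻¹ ∫_U f)` over nonzero continuous
non-negative positive definite `f : ℝ → ℝ`. -/
def ratioSet1 (U V : Set ℝ) : Set ℝ :=
  { c | ∃ f : ℝ → ℝ, Continuous f ∧ (∀ x, 0 ≤ f x) ∧ IsPosDefR1 f ∧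
      f ≠ 0 ∧ 0 < ∫ x in U, f x ∧
      c = ((volume V).toReal⁻¹ * ∫ x in V, f x) /
          ((volume U).toReal⁻¹ * ∫ x in U, f x) }

/-- The sharp constant `C_1(U,V)`. -/
def doublingConst1 (U V : Set ℝ) : ℝ := sSup (ratioSet1 U V)

/-! Let `Λ v = max 0 (1 - |v|)`, the autocorrelation of `𝟙_[0,1]`, and `φ = tentConv f`, so that
`φ t = ∫ f (t + v) Λ v dv`. The translates `Λ (· - i)`, `|i| ≤ r`, sum to at least `1` on `[-r, r]`,
hence `∫_{-r}^r f ≤ ∑_{|i| ≤ r} φ i`. Positive definiteness tested against the signed density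
`𝟙_[0,1] - 𝟙_[k,k+1]` gives `φ k + φ (-k) ≤ 2 φ 0`, so the sum is at most `(2r + 1) φ 0`; and
`φ 0 ≤ ∫_{-1}^1 f` because `Λ ≤ 𝟙_[-1,1]`. The integral form of positive definiteness is obtained
from the finite one through midpoint Riemann sums. -/

open Finset

section

variable {f : ℝ → ℝ}

theorem IsPosDefR1.sum_sum_mul_nonneg (hf : IsPosDefR1 f) {ι : Type*}
    (s : Finset ι) (x c : ι → ℝ) :
    0 ≤ ∑ i ∈ s, ∑ j ∈ s, c i * c j * f (x i - x j) := by
  classical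
  set C : ℝ → ℝ := fun a => ∑ i ∈ s with x i = a, c i
  have fiber (G : ℝ → ℝ) : ∑ a ∈ s.image x, C a * G a = ∑ i ∈ s, c i * G (x i) := by
    refine sum_image' _ fun i _ => ?_
    rw [sum_mul]
    exact sum_congr rfl fun j hj => by rw [(mem_filter.mp hj).2]
  have regroup : ∑ i ∈ s, ∑ j ∈ s, c i * c j * f (x i - x j) =
      ∑ a ∈ s.image x, ∑ b ∈ s.image x, C a * C b * f (a - b) := by
    simp_rw [mul_assoc, ← mul_sum, fiber fun a => ∑ b ∈ s.image x, C b * f (a - b),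
      fiber fun b => f (_ - b)]
  obtain ⟨hre, -⟩ := hf (s.image x) fun a => (C a : ℂ)
  rw [regroup]
  convert hre using 1
  push_cast
  simp [Complex.conj_ofReal]

theorem IsPosDefR1.sum_sum_secondDiff_nonneg (hf : IsPosDefR1 f) (k : ℝ)
    {ι : Type*} (s : Finset ι) (y : ι → ℝ) :
    0 ≤ ∑ i ∈ s, ∑ j ∈ s, (2 * f (y i - y j) - f (k + (y i - y j)) - f (-k + (y i - y j))) := by
  have := hf.sum_sum_mul_nonneg (univ ×ˢ s) (fun p => bif p.1 then y p.2 - k else y p.2)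
    (fun p => bif p.1 then -1 else 1)
  simp only [sum_product, Fintype.sum_bool, cond_true, cond_false] at this
  convert this using 1
  simp only [← sum_add_distrib]
  refine sum_congr rfl fun i _ => sum_congr rfl fun j _ => ?_
  ring_nf

def gridMidpoint (M i : ℕ) : ℝ := (i + 1 / 2) / M

theorem abs_integral_sub_sum_gridMidpoint_le {G : ℝ → ℝ} (hG : Continuous G) {M : ℕ}
    (hM : 0 < M) {ε : ℝ}
    (hε : ∀ x ∈ Set.Icc (0 : ℝ) 1, ∀ y ∈ Set.Icc (0 : ℝ) 1, |x - y| ≤ 1 / M → |G x - G y| ≤ ε) :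
    |(∫ x in (0 : ℝ)..1, G x) - (∑ i ∈ range M, G (gridMidpoint M i)) / M| ≤ ε := by
  have hM' : (0 : ℝ) < M := by exact_mod_cast hM
  set a : ℕ → ℝ := fun i => i / M
  have cells : ∫ x in (0 : ℝ)..1, G x = ∑ i ∈ range M, ∫ x in a i..a (i + 1), G x := by
    rw [intervalIntegral.sum_integral_adjacent_intervals fun i _ => hG.intervalIntegrable _ _]
    simp [a, hM'.ne']
  have cell_error (i : ℕ) (hi : i ∈ range M) :
      |(∫ x in a i..a (i + 1), G x) - G (gridMidpoint M i) / M| ≤ ε / M := by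
    have hiM : (i : ℝ) + 1 ≤ M := by exact_mod_cast mem_range.mp hi
    have cell_length : a (i + 1) - a i = 1 / M := by simp only [a]; push_cast; ring
    have midpoint_term :
        G (gridMidpoint M i) / M = ∫ _ in a i..a (i + 1), G (gridMidpoint M i) := by
      rw [intervalIntegral.integral_const, cell_length, smul_eq_mul]; ring
    rw [midpoint_term, ← intervalIntegral.integral_sub (hG.intervalIntegrable _ _)
      intervalIntegrable_const, ← Real.norm_eq_abs]
    have hσ : gridMidpoint M i ∈ Set.Icc (a i) (a (i + 1)) := by
      simp only [gridMidpoint, a]; push_cast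
      constructor <;> gcongr <;> linarith
    calc _ ≤ ε * |a (i + 1) - a i| := by
          refine intervalIntegral.norm_integral_le_of_norm_le_const fun x hx => ?_
          rw [Set.uIoc_of_le (by linarith [hσ.1, hσ.2])] at hx
          have h0 : 0 ≤ a i := by positivity
          have h1 : a (i + 1) ≤ 1 := by simp only [a]; push_cast; rw [div_le_one hM']; exact hiM
          refine hε x ⟨by linarith [hx.1], by linarith [hx.2]⟩ _
            ⟨by linarith [hσ.1], by linarith [hσ.2]⟩ ?_
          rw [abs_le]; constructor <;> linarith [hx.1, hx.2, hσ.1, hσ.2]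
      _ = ε / M := by rw [cell_length, abs_of_pos (by positivity)]; ring
  calc |(∫ x in (0 : ℝ)..1, G x) - (∑ i ∈ range M, G (gridMidpoint M i)) / M|
      = |∑ i ∈ range M, ((∫ x in a i..a (i + 1), G x) - G (gridMidpoint M i) / M)| := by
        rw [cells, sum_sub_distrib, sum_div]
    _ ≤ ∑ i ∈ range M, |(∫ x in a i..a (i + 1), G x) - G (gridMidpoint M i) / M| :=
        abs_sum_le_sum_abs _ _
    _ ≤ ∑ i ∈ range M, ε / M := sum_le_sum cell_error
    _ = ε := by rw [sum_const, card_range, nsmul_eq_mul]; field_simp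

theorem abs_integral_integral_sub_sum_gridMidpoint_le {h : ℝ → ℝ} (hh : Continuous h) {M : ℕ}
    (hM : 0 < M) {ε : ℝ}
    (hε : ∀ x ∈ Set.Icc (-1 : ℝ) 1, ∀ y ∈ Set.Icc (-1 : ℝ) 1, |x - y| ≤ 1 / M →
      |h x - h y| ≤ ε) :
    |(∫ s in (0 : ℝ)..1, ∫ u in (0 : ℝ)..1, h (s - u)) -
      (∑ i ∈ range M, ∑ j ∈ range M, h (gridMidpoint M i - gridMidpoint M j)) / M ^ 2| ≤
      2 * ε := by
  have hM' : (0 : ℝ) < M := by exact_mod_cast hM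
  set σ := gridMidpoint M
  have hσ (j : ℕ) (hj : j ∈ range M) : σ j ∈ Set.Icc (0 : ℝ) 1 := by
    have hjM : (j : ℝ) + 1 ≤ M := by exact_mod_cast mem_range.mp hj
    simp only [σ, gridMidpoint]
    exact ⟨by positivity, by rw [div_le_one hM']; linarith⟩
  have diff_mem {x y : ℝ} (hx : x ∈ Set.Icc (0 : ℝ) 1) (hy : y ∈ Set.Icc (0 : ℝ) 1) :
      x - y ∈ Set.Icc (-1 : ℝ) 1 := ⟨by linarith [hx.1, hy.2], by linarith [hx.2, hy.1]⟩
  set B : ℝ → ℝ := fun s => (∑ j ∈ range M, h (s - σ j)) / M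
  have inner (s : ℝ) (hs : s ∈ Set.Icc (0 : ℝ) 1) :
      ‖(∫ u in (0 : ℝ)..1, h (s - u)) - B s‖ ≤ ε :=
    abs_integral_sub_sum_gridMidpoint_le (by fun_prop) hM fun x hx y hy hxy =>
      hε _ (diff_mem hs hx) _ (diff_mem hs hy) (by rwa [sub_sub_sub_cancel_left, abs_sub_comm])
  have outer (j : ℕ) (hj : j ∈ range M) :
      |(∫ s in (0 : ℝ)..1, h (s - σ j)) - (∑ i ∈ range M, h (σ i - σ j)) / M| ≤ ε :=
    abs_integral_sub_sum_gridMidpoint_le (by fun_prop) hM fun x hx y hy hxy =>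
      hε _ (diff_mem hx (hσ j hj)) _ (diff_mem hy (hσ j hj)) (by rwa [sub_sub_sub_cancel_right])
  have hA :
      ‖(∫ s in (0 : ℝ)..1, ∫ u in (0 : ℝ)..1, h (s - u)) - ∫ s in (0 : ℝ)..1, B s‖ ≤ ε := by
    rw [← intervalIntegral.integral_sub ((by fun_prop : Continuous _).intervalIntegrable _ _)
      ((by fun_prop : Continuous B).intervalIntegrable _ _)]
    calc _ ≤ ε * |1 - 0| := intervalIntegral.norm_integral_le_of_norm_le_const fun s hs =>
          inner s (Set.Ioc_subset_Icc_self (by simpa using hs))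
      _ = ε := by norm_num
  have hB : |(∫ s in (0 : ℝ)..1, B s) -
      (∑ i ∈ range M, ∑ j ∈ range M, h (σ i - σ j)) / M ^ 2| ≤ ε := by
    have integral_B :
        ∫ s in (0 : ℝ)..1, B s = (∑ j ∈ range M, ∫ s in (0 : ℝ)..1, h (s - σ j)) / M := by
      rw [intervalIntegral.integral_div, intervalIntegral.integral_finsetSum fun j _ =>
        (by fun_prop : Continuous _).intervalIntegrable _ _]
    calc _ = |(∑ j ∈ range M, ∫ s in (0 : ℝ)..1, h (s - σ j)) -
          (∑ j ∈ range M, ∑ i ∈ range M, h (σ i - σ j)) / M| / M := by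
          rw [integral_B, sum_comm (s := range M), ← abs_of_pos hM', ← abs_div, abs_of_pos hM']
          congr 1
          field_simp
      _ = |∑ j ∈ range M, ((∫ s in (0 : ℝ)..1, h (s - σ j)) -
          (∑ i ∈ range M, h (σ i - σ j)) / M)| / M := by
          rw [sum_sub_distrib, sum_div]
      _ ≤ (∑ j ∈ range M, ε) / M := by
          gcongr; exact (abs_sum_le_sum_abs _ _).trans (sum_le_sum outer)
      _ = ε := by rw [sum_const, card_range, nsmul_eq_mul]; field_simp
  calc _ ≤ ‖(∫ s in (0 : ℝ)..1, ∫ u in (0 : ℝ)..1, h (s - u)) - ∫ s in (0 : ℝ)..1, B s‖ +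
        |(∫ s in (0 : ℝ)..1, B s) - (∑ i ∈ range M, ∑ j ∈ range M, h (σ i - σ j)) / M ^ 2| :=
        abs_sub_le _ _ _
    _ ≤ 2 * ε := by linarith

theorem integral_integral_nonneg_of_sum_gridMidpoint_nonneg {h : ℝ → ℝ} (hh : Continuous h)
    (hsum : ∀ M : ℕ, 0 < M →
      0 ≤ ∑ i ∈ range M, ∑ j ∈ range M, h (gridMidpoint M i - gridMidpoint M j)) :
    0 ≤ ∫ s in (0 : ℝ)..1, ∫ u in (0 : ℝ)..1, h (s - u) := by
  refine le_of_forall_pos_le_add fun ε hε => ?_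
  obtain ⟨δ, hδ, hδε⟩ := Metric.uniformContinuousOn_iff_le.mp
    (isCompact_Icc.uniformContinuousOn_of_continuous hh.continuousOn) (ε / 2) (half_pos hε)
  obtain ⟨n, hn⟩ := exists_nat_one_div_lt hδ
  set S := (∑ i ∈ range (n + 1), ∑ j ∈ range (n + 1),
    h (gridMidpoint (n + 1) i - gridMidpoint (n + 1) j)) / ((n + 1 : ℕ) : ℝ) ^ 2
  have approx := abs_integral_integral_sub_sum_gridMidpoint_le hh n.succ_pos
    fun x hx y hy hxy => hδε x hx y hy (by rw [Real.dist_eq]; push_cast at hxy; linarith)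
  have hS : 0 ≤ S := div_nonneg (hsum _ n.succ_pos) (by positivity)
  linarith [neg_abs_le ((∫ s in (0 : ℝ)..1, ∫ u in (0 : ℝ)..1, h (s - u)) - S)]


def tentConv (f : ℝ → ℝ) (t : ℝ) : ℝ := ∫ s in (0 : ℝ)..1, ∫ u in (0 : ℝ)..1, f (t + (s - u))

theorem integral_unitInterval_comp_add_sub (t s : ℝ) :
    ∫ u in (0 : ℝ)..1, f (t + (s - u)) = ∫ x in t + s - 1..t + s, f x := by
  simp_rw [← add_sub_assoc, intervalIntegral.integral_comp_sub_left (fun x => f x), sub_zero]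

theorem IsPosDefR1.tentConv_add_tentConv_neg_le (hf : IsPosDefR1 f) (hc : Continuous f) (k : ℝ) :
    tentConv f k + tentConv f (-k) ≤ 2 * tentConv f 0 := by
  have key := integral_integral_nonneg_of_sum_gridMidpoint_nonneg
    (h := fun w => 2 * f w - f (k + w) - f (-k + w)) (by fun_prop)
    fun M _ => hf.sum_sum_secondDiff_nonneg k _ _
  have outer_integrable {g : ℝ → ℝ} (hg : Continuous g) :
      IntervalIntegrable (fun s => ∫ u in (0 : ℝ)..1, g (s - u)) volume 0 1 :=
    (by fun_prop : Continuous _).intervalIntegrable _ _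
  have inner_integrable {g : ℝ → ℝ} (hg : Continuous g) (s : ℝ) :
      IntervalIntegrable (fun u => g (s - u)) volume 0 1 :=
    (by fun_prop : Continuous _).intervalIntegrable _ _
  have hk : Continuous fun w => f (k + w) := by fun_prop
  have hk' : Continuous fun w => f (-k + w) := by fun_prop
  have inner (s : ℝ) : ∫ u in (0 : ℝ)..1, (2 * f (s - u) - f (k + (s - u)) - f (-k + (s - u))) =
      2 * (∫ u in (0 : ℝ)..1, f (s - u)) - (∫ u in (0 : ℝ)..1, f (k + (s - u))) -
        ∫ u in (0 : ℝ)..1, f (-k + (s - u)) := by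
    rw [intervalIntegral.integral_sub
        ((inner_integrable hc s).const_mul 2 |>.sub (inner_integrable hk s))
        (inner_integrable hk' s),
      intervalIntegral.integral_sub ((inner_integrable hc s).const_mul 2) (inner_integrable hk s),
      intervalIntegral.integral_const_mul]
  simp_rw [inner] at key
  rw [intervalIntegral.integral_sub
      ((outer_integrable hc).const_mul 2 |>.sub (outer_integrable hk)) (outer_integrable hk'),
    intervalIntegral.integral_sub ((outer_integrable hc).const_mul 2) (outer_integrable hk),
    intervalIntegral.integral_const_mul] at key
  simp only [tentConv, zero_add]
  linarith

theorem tentConv_le_integral (hc : Continuous f) (hnn : ∀ x, 0 ≤ f x) (t : ℝ) :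
    tentConv f t ≤ ∫ x in t - 1..t + 1, f x := by
  have window_le (s : ℝ) (hs : s ∈ Set.Icc (0 : ℝ) 1) :
      ∫ u in (0 : ℝ)..1, f (t + (s - u)) ≤ ∫ x in t - 1..t + 1, f x := by
    rw [integral_unitInterval_comp_add_sub]
    exact intervalIntegral.integral_mono_interval (by linarith [hs.1]) (by linarith)
      (by linarith [hs.2]) (ae_of_all _ hnn) (hc.intervalIntegrable _ _)
  calc tentConv f t ≤ ∫ _ in (0 : ℝ)..1, ∫ x in t - 1..t + 1, f x :=
        intervalIntegral.integral_mono_on zero_le_one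
          ((by fun_prop : Continuous _).intervalIntegrable _ _) intervalIntegrable_const
          window_le
    _ = ∫ x in t - 1..t + 1, f x := by simp

theorem integral_le_sum_tentConv (hc : Continuous f) (hnn : ∀ x, 0 ≤ f x) (a : ℝ) (n : ℕ) :
    ∫ x in a..a + n, f x ≤ ∑ i ∈ range (n + 1), tentConv f (a + i) := by
  have windows_ge (s : ℝ) (hs : s ∈ Set.Icc (0 : ℝ) 1) :
      ∫ x in a..a + n, f x ≤ ∑ i ∈ range (n + 1), ∫ u in (0 : ℝ)..1, f (a + i + (s - u)) := by
    have tiling : ∑ i ∈ range (n + 1), ∫ u in (0 : ℝ)..1, f (a + i + (s - u)) =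
        ∫ x in a + s - 1..a + s + n, f x := by
      simp_rw [integral_unitInterval_comp_add_sub]
      set b : ℕ → ℝ := fun i => a + s - 1 + i
      calc ∑ i ∈ range (n + 1), ∫ x in a + i + s - 1..a + i + s, f x
          = ∑ i ∈ range (n + 1), ∫ x in b i..b (i + 1), f x :=
            sum_congr rfl fun i _ => by congr 1 <;> simp only [b] <;> push_cast <;> ring
        _ = ∫ x in b 0..b (n + 1), f x :=
            intervalIntegral.sum_integral_adjacent_intervals fun i _ => hc.intervalIntegrable _ _
        _ = ∫ x in a + s - 1..a + s + n, f x := by congr 1 <;> simp only [b] <;> push_cast <;> ring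
    rw [tiling]
    exact intervalIntegral.integral_mono_interval (by linarith [hs.2]) (by linarith [hs.1])
      (by linarith [hs.1]) (ae_of_all _ hnn) (hc.intervalIntegrable _ _)
  calc ∫ x in a..a + n, f x = ∫ _ in (0 : ℝ)..1, ∫ x in a..a + n, f x := by simp
    _ ≤ ∫ s in (0 : ℝ)..1, ∑ i ∈ range (n + 1), ∫ u in (0 : ℝ)..1, f (a + i + (s - u)) :=
        intervalIntegral.integral_mono_on zero_le_one intervalIntegrable_const
          ((by fun_prop : Continuous _).intervalIntegrable _ _)
          windows_ge
    _ = ∑ i ∈ range (n + 1), tentConv f (a + i) :=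
        intervalIntegral.integral_finsetSum fun i _ =>
          (by fun_prop : Continuous _).intervalIntegrable _ _

theorem sum_range_shift_le_mul_of_add_neg_le {ψ : ℝ → ℝ} (hψ : ∀ k, ψ k + ψ (-k) ≤ 2 * ψ 0)
    (r : ℕ) :
    ∑ i ∈ range (2 * r + 1), ψ (-r + i) ≤ (2 * r + 1) * ψ 0 := by
  have reflect :
      ∑ i ∈ range (2 * r + 1), ψ (-r + i) = ∑ i ∈ range (2 * r + 1), ψ (-(-r + i)) := by
    rw [← sum_range_reflect]
    refine sum_congr rfl fun i hi => ?_
    have : i ≤ 2 * r := Nat.lt_succ_iff.mp (mem_range.mp hi)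
    rw [Nat.add_sub_cancel, Nat.cast_sub this]
    push_cast; ring_nf
  have := sum_le_sum fun i (_ : i ∈ range (2 * r + 1)) => hψ (-r + i)
  rw [sum_add_distrib, ← reflect, sum_const, card_range, nsmul_eq_mul] at this
  push_cast at this
  linarith

end

/-- For `r ∈ ℕ`, `r ≥ 1`, every continuous non-negative positive definite
`f : ℝ → ℝ` satisfies
`(1/(2r)) ∫_{-r}^r f ≤ (2 + 1/r) (1/2) ∫_{-1}^1 f`. -/
theorem one_dim_doubling_bound (r : ℕ) (hr : 1 ≤ r)
    (f : ℝ → ℝ) (hc : Continuous f) (hnn : ∀ x, 0 ≤ f x) (hpd : IsPosDefR1 f) :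
    (1 / (2 * (r : ℝ))) * ∫ x in Set.Icc (-(r : ℝ)) (r : ℝ), f x ≤
      (2 + 1 / (r : ℝ)) * ((1 / 2) * ∫ x in Set.Icc (-1 : ℝ) 1, f x) := by
  have hr' : (0 : ℝ) < r := by exact_mod_cast hr
  have cover : ∫ x in (-r : ℝ)..r, f x ≤ ∑ i ∈ range (2 * r + 1), tentConv f (-r + i) := by
    convert integral_le_sum_tentConv hc hnn (-r) (2 * r) using 2
    push_cast; ring
  have pairing := sum_range_shift_le_mul_of_add_neg_le (hpd.tentConv_add_tentConv_neg_le hc) r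
  have center : tentConv f 0 ≤ ∫ x in (-1 : ℝ)..1, f x := by
    simpa using tentConv_le_integral hc hnn 0
  have total : ∫ x in (-r : ℝ)..r, f x ≤ (2 * r + 1) * ∫ x in (-1 : ℝ)..1, f x := by
    linarith [mul_le_mul_of_nonneg_left center (by positivity : (0 : ℝ) ≤ 2 * r + 1)]
  rw [integral_Icc_eq_integral_Ioc, ← intervalIntegral.integral_of_le (by linarith),
    integral_Icc_eq_integral_Ioc, ← intervalIntegral.integral_of_le (by norm_num)]
  calc (1 / (2 * (r : ℝ))) * ∫ x in (-r : ℝ)..r, f x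
      ≤ (1 / (2 * (r : ℝ))) * ((2 * r + 1) * ∫ x in (-1 : ℝ)..1, f x) := by gcongr
    _ = (2 + 1 / (r : ℝ)) * ((1 / 2) * ∫ x in (-1 : ℝ)..1, f x) := by field_simp
end
end

section
/- For every natural number r ≥ 1, the sharp constant C_1([-1,1],[-r,r]) satisfies 2 - 1/r ≤ C_1([-1,1],[-r,r]) ≤ 2 + 1/r. -/
/-!
Upper bound. Positive definiteness with coefficients `1` on the points `i / n` and `-1` on the
points `t + i / n` gives `∑ f (t + i/n - j/n) ≤ ∑ f (i/n - j/n)`; in the Riemann-sum limit this says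
`H t ≤ H 0`, where `H t` is the average of `f (t + u - v)` over the unit square. Since
`∫ v in 0..1, f (t + u - v)` is the integral of `f` over a unit interval, the `2r + 1` translates
`H (k - r)` cover `[-r, r]`, so `∫_{-r}^{r} f ≤ (2r + 1) H 0 ≤ (2r + 1) ∫_{-1}^{1} f`.

Lower bound. With `h = r / (2r - 1)` the kernel `|∑_{j<N} e^{i π j x / h}|²` integrates to exactly
`2 k h N` over `[-k h, k h]` (only the diagonal terms survive), in particular over `[-h, h]` and
over `[-r, r] = [-(2r - 1) h, (2r - 1) h]`, while on `h ≤ |x| ≤ 1` it is bounded uniformly in `N`.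
Its ratio therefore tends to `1 / h = 2 - 1 / r`.
-/

open MeasureTheory Complex Pointwise

noncomputable section

open Finset Filter Topology
open scoped Real

namespace IsPosDefR1

variable {f : ℝ → ℝ}

theorem apply_neg (hf : IsPosDefR1 f) (x : ℝ) : f (-x) = f x := by
  rcases eq_or_ne x 0 with rfl | hx
  · simp
  -- The form with coefficients `1` at `0` and `I` at `x` has imaginary part `f x - f (-x)`.
  have h := (hf {0, x} fun y => if y = 0 then 1 else I).2
  simp only [Finset.sum_pair hx.symm, if_pos, if_neg hx, sub_self, sub_zero, zero_sub, map_one,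
    conj_I, one_mul, mul_one, add_im, mul_im, ofReal_re, ofReal_im, I_re, I_im, neg_re,
    neg_im, mul_re] at h
  linarith

-- Coincident points of the family are merged by adding their coefficients.
theorem sum_mul_nonneg {ι : Type*} (hf : IsPosDefR1 f) (s : Finset ι) (p c : ι → ℝ) :
    0 ≤ ∑ i ∈ s, ∑ j ∈ s, c i * c j * f (p i - p j) := by
  classical
  set d : ℝ → ℝ := fun a => ∑ i ∈ s with p i = a, c i
  have hd (g : ℝ → ℝ) : ∑ a ∈ s.image p, d a * g a = ∑ i ∈ s, c i * g (p i) := by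
    refine Finset.sum_image' _ fun i _ => ?_
    rw [Finset.sum_mul]
    exact Finset.sum_congr rfl fun j hj => by rw [(Finset.mem_filter.1 hj).2]
  have h := (hf (s.image p) fun a => (d a : ℂ)).1
  simp only [conj_ofReal, ← ofReal_mul, ← ofReal_sum, ofReal_re, mul_assoc, ← Finset.mul_sum,
    hd] at h
  simpa only [Finset.mul_sum, mul_assoc] using h

theorem sum_sum_shift_le {ι : Type*} (hf : IsPosDefR1 f) (s : Finset ι) (p : ι → ℝ) (t : ℝ) :
    ∑ i ∈ s, ∑ j ∈ s, f (t + p i - p j) ≤ ∑ i ∈ s, ∑ j ∈ s, f (p i - p j) := by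
  have h := hf.sum_mul_nonneg (s.disjSum s) (Sum.elim p fun i => t + p i)
    (Sum.elim (fun _ => 1) fun _ => -1)
  have hswap : ∑ i ∈ s, ∑ j ∈ s, f (p i - (t + p j)) = ∑ i ∈ s, ∑ j ∈ s, f (t + p i - p j) := by
    rw [Finset.sum_comm]
    exact Finset.sum_congr rfl fun i _ => Finset.sum_congr rfl fun j _ => by
      rw [← hf.apply_neg]; ring_nf
  simp only [Finset.sum_disjSum, Sum.elim_inl, Sum.elim_inr, one_mul, mul_one, neg_mul, mul_neg,
    Finset.sum_neg_distrib, Finset.sum_add_distrib, add_sub_add_left_eq_sub, hswap] at h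
  linarith

theorem apply_le_apply_zero (hf : IsPosDefR1 f) (x : ℝ) : f x ≤ f 0 := by
  simpa using hf.sum_sum_shift_le {()} (fun _ => 0) x

theorem abs_apply_le_apply_zero (hf : IsPosDefR1 f) (x : ℝ) : |f x| ≤ f 0 := by
  have h := hf.sum_mul_nonneg Finset.univ (fun b : Bool => if b then x else 0) fun _ => 1
  simp only [Fintype.sum_bool, ↓reduceIte, Bool.false_eq_true, sub_zero, sub_self, zero_sub,
    mul_one, hf.apply_neg] at h
  exact abs_le.2 ⟨by linarith, hf.apply_le_apply_zero x⟩

end IsPosDefR1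

theorem isPosDefC1_exp_ofReal_mul_I (ξ : ℝ) : IsPosDefC1 fun x => exp (↑(ξ * x) * I) := by
  intro X c
  have hsq : ∑ a ∈ X, ∑ b ∈ X, c a * (starRingEnd ℂ) (c b) * exp (↑(ξ * (a - b)) * I) =
      (normSq (∑ a ∈ X, c a * exp (↑(ξ * a) * I)) : ℂ) := by
    rw [← mul_conj, map_sum, Finset.sum_mul_sum]
    refine Finset.sum_congr rfl fun a _ => Finset.sum_congr rfl fun b _ => ?_
    rw [map_mul, ← exp_conj, mul_mul_mul_comm, ← exp_add]
    congr 2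
    simp only [map_mul, conj_ofReal, conj_I]
    push_cast
    ring
  rw [hsq, ofReal_re, ofReal_im]
  exact ⟨normSq_nonneg _, rfl⟩

theorem IsPosDefC1.sum {ι : Type*} (s : Finset ι) {g : ι → ℝ → ℂ}
    (hg : ∀ i ∈ s, IsPosDefC1 (g i)) : IsPosDefC1 fun x => ∑ i ∈ s, g i x := by
  intro X c
  have hswap : ∑ a ∈ X, ∑ b ∈ X, c a * (starRingEnd ℂ) (c b) * ∑ i ∈ s, g i (a - b) =
      ∑ i ∈ s, ∑ a ∈ X, ∑ b ∈ X, c a * (starRingEnd ℂ) (c b) * g i (a - b) := by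
    simp only [Finset.mul_sum]
    exact (Finset.sum_congr rfl fun a _ => Finset.sum_comm).trans Finset.sum_comm
  rw [hswap, re_sum, im_sum]
  exact ⟨Finset.sum_nonneg fun i hi => (hg i hi X c).1,
    Finset.sum_eq_zero fun i hi => (hg i hi X c).2⟩

theorem integral_comp_nat_floor_mul (g : ℕ → ℝ) {n : ℕ} (hn : 0 < n) :
    ∫ u in (0 : ℝ)..1, g ⌊u * n⌋₊ = (∑ i ∈ range n, g i) / n := by
  have hn' : (0 : ℝ) < n := Nat.cast_pos.2 hn
  have hle (i : ℕ) : (i : ℝ) / n ≤ ((i + 1 : ℕ) : ℝ) / n := by gcongr; simp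
  have hstep (i : ℕ) : Set.EqOn (fun _ => g i) (fun u : ℝ => g ⌊u * n⌋₊)
      (Set.Ioo ((i : ℝ) / n) (((i + 1 : ℕ) : ℝ) / n)) := by
    rintro u ⟨hi, hi'⟩
    rw [div_lt_iff₀ hn'] at hi
    have hu : 0 ≤ u * n := (Nat.cast_nonneg i).trans hi.le
    rw [lt_div_iff₀ hn'] at hi'
    push_cast at hi'
    have hfloor : ⌊u * n⌋₊ = i := (Nat.floor_eq_iff hu).2 ⟨hi.le, hi'⟩
    simp only [hfloor]
  have hint (i : ℕ) : IntervalIntegrable (fun u : ℝ => g ⌊u * n⌋₊) volume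
      ((i : ℝ) / n) (((i + 1 : ℕ) : ℝ) / n) :=
    intervalIntegrable_const.congr_uIoo (by rw [Set.uIoo_of_le (hle i)]; exact hstep i)
  have hpiece (i : ℕ) : ∫ u in ((i : ℝ) / n)..(((i + 1 : ℕ) : ℝ) / n), g ⌊u * n⌋₊ = g i / n := by
    rw [← intervalIntegral.integral_congr_Ioo_of_le (hle i) (hstep i),
      intervalIntegral.integral_const, smul_eq_mul]
    push_cast
    field_simp
    ring
  have := intervalIntegral.sum_integral_adjacent_intervals (a := fun i : ℕ => (i : ℝ) / n) (n := n)
    fun i _ => hint i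
  simp only [hpiece, Nat.cast_zero, zero_div, div_self hn'.ne'] at this
  rw [← this, Finset.sum_div]

theorem tendsto_sum_sum_div_sq {G : ℝ → ℝ → ℝ} (hG : Continuous (Function.uncurry G)) {C : ℝ}
    (hC : ∀ u v, |G u v| ≤ C) :
    Tendsto (fun n : ℕ => (∑ i ∈ range n, ∑ j ∈ range n, G (i / n) (j / n)) / n ^ 2) atTop
      (𝓝 (∫ u in (0 : ℝ)..1, ∫ v in (0 : ℝ)..1, G u v)) := by
  -- The Riemann sum is the integral of the step function `G (q n u) (q n v)`.
  set q : ℕ → ℝ → ℝ := fun n u => ⌊u * n⌋₊ / n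
  have hq {u : ℝ} (hu : 0 ≤ u) : Tendsto (fun n => q n u) atTop (𝓝 u) :=
    (tendsto_nat_floor_mul_div_atTop hu).comp tendsto_natCast_atTop_atTop
  have hqm (n : ℕ) : Measurable (q n) :=
    (measurable_from_nat (f := fun m : ℕ => (m : ℝ) / n)).comp (measurable_id.mul_const _).nat_floor
  have hinner {u : ℝ} (hu : 0 ≤ u) :
      Tendsto (fun n => ∫ v in (0 : ℝ)..1, G (q n u) (q n v)) atTop
        (𝓝 (∫ v in (0 : ℝ)..1, G u v)) := by
    refine intervalIntegral.tendsto_integral_filter_of_dominated_convergence (fun _ => C)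
      (Eventually.of_forall fun n => ?_) (Eventually.of_forall fun n => ?_)
      intervalIntegrable_const (ae_of_all _ fun v hv => ?_)
    · exact ((hG.uncurry_left _).measurable.comp (hqm n)).aestronglyMeasurable
    · exact ae_of_all _ fun v _ => (Real.norm_eq_abs _).trans_le (hC _ _)
    · rw [Set.uIoc_of_le zero_le_one] at hv
      exact (hG.tendsto (u, v)).comp ((hq hu).prodMk_nhds (hq hv.1.le))
  have hbound (n : ℕ) (u : ℝ) : ‖∫ v in (0 : ℝ)..1, G (q n u) (q n v)‖ ≤ C := by
    simpa using intervalIntegral.norm_integral_le_of_norm_le_const (a := 0) (b := 1)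
      fun v _ => (Real.norm_eq_abs _).trans_le (hC (q n u) (q n v))
  have houter : Tendsto (fun n => ∫ u in (0 : ℝ)..1, ∫ v in (0 : ℝ)..1, G (q n u) (q n v)) atTop
      (𝓝 (∫ u in (0 : ℝ)..1, ∫ v in (0 : ℝ)..1, G u v)) := by
    refine intervalIntegral.tendsto_integral_filter_of_dominated_convergence (fun _ => C)
      (Eventually.of_forall fun n => ?_)
      (Eventually.of_forall fun n => ae_of_all _ fun u _ => hbound n u)
      intervalIntegrable_const (ae_of_all _ fun u hu => ?_)
    · exact ((measurable_from_nat (f := fun m : ℕ => ∫ v in (0 : ℝ)..1, G (m / n) (q n v))).comp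
        (measurable_id.mul_const _).nat_floor).aestronglyMeasurable
    · rw [Set.uIoc_of_le zero_le_one] at hu
      exact hinner hu.1.le
  refine houter.congr' ((eventually_gt_atTop 0).mono fun n hn => ?_)
  have hrow (u : ℝ) :
      ∫ v in (0 : ℝ)..1, G (q n u) (q n v) = (∑ j ∈ range n, G (q n u) (j / n)) / n :=
    integral_comp_nat_floor_mul (fun j : ℕ => G (q n u) (j / n)) hn
  simp only [hrow]
  rw [integral_comp_nat_floor_mul (fun i : ℕ => (∑ j ∈ range n, G (i / n) (j / n)) / n) hn,
    ← Finset.sum_div, div_div, sq]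

def unitSquareAverage (f : ℝ → ℝ) (t : ℝ) : ℝ :=
  ∫ u in (0 : ℝ)..1, ∫ v in (0 : ℝ)..1, f (t + u - v)

section UnitSquareAverage

variable {f : ℝ → ℝ}

theorem IsPosDefR1.unitSquareAverage_le (hf : IsPosDefR1 f) (hc : Continuous f) (t : ℝ) :
    unitSquareAverage f t ≤ unitSquareAverage f 0 := by
  have hlim (s : ℝ) := tendsto_sum_sum_div_sq (G := fun u v => f (s + u - v)) (by fun_prop)
    fun _ _ => hf.abs_apply_le_apply_zero _
  refine le_of_tendsto_of_tendsto' (hlim t) (hlim 0) fun n => ?_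
  simp only [zero_add]
  exact div_le_div_of_nonneg_right (hf.sum_sum_shift_le (range n) (fun i => i / n) t)
    (by positivity)

theorem sum_integral_comp_sub (hc : Continuous f) (t : ℝ) (n : ℕ) :
    ∑ i ∈ range n, ∫ v in (0 : ℝ)..1, f (t + i - v) = ∫ x in (t - 1)..(t + n - 1), f x := by
  have := intervalIntegral.sum_integral_adjacent_intervals (μ := volume)
    (a := fun i : ℕ => t - 1 + i) (n := n)
    fun i _ => hc.intervalIntegrable _ _
  simp only [intervalIntegral.integral_comp_sub_left, sub_zero]
  convert this using 2 <;> push_cast <;> ring_nf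

theorem integral_le_sum_unitSquareAverage (hc : Continuous f) (h0 : ∀ x, 0 ≤ f x) (r : ℕ) :
    ∫ x in (-r : ℝ)..r, f x ≤ ∑ i ∈ range (2 * r + 1), unitSquareAverage f (i - r) := by
  have hcont (i : ℕ) : Continuous fun u => ∫ v in (0 : ℝ)..1, f (i - r + u - v) :=
    intervalIntegral.continuous_parametric_intervalIntegral_of_continuous'
      (f := fun u v => f (i - r + u - v)) (μ := volume) (by fun_prop) 0 1
  calc ∫ x in (-r : ℝ)..r, f x = ∫ _ in (0 : ℝ)..1, ∫ x in (-r : ℝ)..r, f x := by simp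
    _ ≤ ∫ u in (0 : ℝ)..1, ∑ i ∈ range (2 * r + 1), ∫ v in (0 : ℝ)..1, f (i - r + u - v) := by
      refine intervalIntegral.integral_mono_on zero_le_one intervalIntegrable_const
        ((continuous_finsetSum _ fun i _ => hcont i).intervalIntegrable 0 1)
        fun u ⟨hu0, hu1⟩ => ?_
      have hsum : ∑ i ∈ range (2 * r + 1), ∫ v in (0 : ℝ)..1, f (i - r + u - v) =
          ∫ x in (u - r - 1)..(u - r + (2 * r + 1 : ℕ) - 1), f x := by
        rw [← sum_integral_comp_sub hc]
        exact Finset.sum_congr rfl fun i _ => by ring_nf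
      rw [hsum]
      refine intervalIntegral.integral_mono_interval ?_ ?_ ?_ (ae_of_all _ h0)
        (hc.intervalIntegrable _ _) <;> push_cast <;> linarith
    _ = ∑ i ∈ range (2 * r + 1), unitSquareAverage f (i - r) :=
      intervalIntegral.integral_finsetSum fun i _ => (hcont i).intervalIntegrable _ _

theorem unitSquareAverage_zero_le (hc : Continuous f) (h0 : ∀ x, 0 ≤ f x) :
    unitSquareAverage f 0 ≤ ∫ x in (-1 : ℝ)..1, f x := by
  calc unitSquareAverage f 0 ≤ ∫ _ in (0 : ℝ)..1, ∫ x in (-1 : ℝ)..1, f x := by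
        refine intervalIntegral.integral_mono_on zero_le_one
          ((intervalIntegral.continuous_parametric_intervalIntegral_of_continuous'
            (f := fun u v => f (0 + u - v)) (μ := volume) (by fun_prop) 0 1).intervalIntegrable 0 1)
          intervalIntegrable_const
          fun u ⟨hu0, hu1⟩ => ?_
        rw [intervalIntegral.integral_comp_sub_left]
        exact intervalIntegral.integral_mono_interval (by linarith) (by linarith) (by linarith)
          (ae_of_all _ h0) (hc.intervalIntegrable _ _)
    _ = ∫ x in (-1 : ℝ)..1, f x := by simp

theorem IsPosDefR1.integral_le (hf : IsPosDefR1 f) (hc : Continuous f) (h0 : ∀ x, 0 ≤ f x)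
    (r : ℕ) : ∫ x in (-r : ℝ)..r, f x ≤ (2 * r + 1) * ∫ x in (-1 : ℝ)..1, f x :=
  calc ∫ x in (-r : ℝ)..r, f x ≤ ∑ i ∈ range (2 * r + 1), unitSquareAverage f (i - r) :=
        integral_le_sum_unitSquareAverage hc h0 r
    _ ≤ ∑ _i ∈ range (2 * r + 1), unitSquareAverage f 0 :=
        Finset.sum_le_sum fun i _ => hf.unitSquareAverage_le hc _
    _ = (2 * r + 1) * unitSquareAverage f 0 := by simp
    _ ≤ (2 * r + 1) * ∫ x in (-1 : ℝ)..1, f x := by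
        gcongr
        exact unitSquareAverage_zero_le hc h0

end UnitSquareAverage

def fejerKernel (ω : ℝ) (N : ℕ) (x : ℝ) : ℝ :=
  ‖∑ j ∈ range N, exp (I * ↑(ω * x)) ^ j‖ ^ 2

namespace fejerKernel

variable (ω : ℝ) (N : ℕ)

theorem continuous : Continuous (fejerKernel ω N) := by
  unfold fejerKernel
  fun_prop

theorem nonneg (x : ℝ) : 0 ≤ fejerKernel ω N x := by
  unfold fejerKernel
  positivity

theorem ofReal_eq_sum (x : ℝ) :
    (fejerKernel ω N x : ℂ) =
      ∑ j ∈ range N, ∑ k ∈ range N, exp (↑(ω * (j - k) * x) * I) := by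
  rw [fejerKernel, ofReal_pow, ← mul_conj', map_sum, Finset.sum_mul_sum]
  refine Finset.sum_congr rfl fun j _ => Finset.sum_congr rfl fun k _ => ?_
  rw [map_pow, ← exp_conj, ← exp_nat_mul, ← exp_nat_mul, ← exp_add]
  congr 1
  simp only [map_mul, conj_ofReal, conj_I]
  push_cast
  ring

theorem eq_sum_cos (x : ℝ) :
    fejerKernel ω N x = ∑ j ∈ range N, ∑ k ∈ range N, Real.cos (ω * (j - k) * x) := by
  have := congrArg re (ofReal_eq_sum ω N x)
  simpa only [ofReal_re, re_sum, exp_ofReal_mul_I_re] using this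

theorem isPosDefR1 : IsPosDefR1 (fejerKernel ω N) := by
  unfold IsPosDefR1
  simp only [ofReal_eq_sum]
  exact IsPosDefC1.sum _ fun j _ => IsPosDefC1.sum _ fun k _ =>
    by simpa only [mul_assoc] using isPosDefC1_exp_ofReal_mul_I (ω * (j - k))

theorem le_inv_sin_sq {x : ℝ} (hx : Real.sin (ω * x / 2) ≠ 0) :
    fejerKernel ω N x ≤ 1 / Real.sin (ω * x / 2) ^ 2 := by
  set z := exp (I * ↑(ω * x))
  have hz : ‖z - 1‖ = 2 * |Real.sin (ω * x / 2)| := by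
    rw [norm_exp_I_mul_ofReal_sub_one, norm_mul, Real.norm_two, Real.norm_eq_abs]
  have hz1 : z ≠ 1 := fun h => by
    rw [h, sub_self, norm_zero] at hz
    exact hx (abs_eq_zero.1 (by linarith))
  have hnum : ‖z ^ N - 1‖ ≤ 2 := (norm_sub_le _ _).trans (by
    rw [norm_pow, norm_exp_I_mul_ofReal, one_pow, norm_one]; norm_num)
  calc fejerKernel ω N x = (‖z ^ N - 1‖ / ‖z - 1‖) ^ 2 := by
        rw [fejerKernel, geom_sum_eq hz1, norm_div]
    _ ≤ (2 / (2 * |Real.sin (ω * x / 2)|)) ^ 2 := by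
        rw [hz]
        gcongr
    _ = 1 / Real.sin (ω * x / 2) ^ 2 := by
        rw [div_pow, mul_pow, sq_abs]
        field_simp

theorem integral_symm (hω : ω ≠ 0) {A : ℝ} (hA : ∀ m : ℤ, Real.sin (ω * m * A) = 0) :
    ∫ x in (-A)..A, fejerKernel ω N x = 2 * A * N := by
  have hcos (j k : ℕ) :
      ∫ x in (-A)..A, Real.cos (ω * (j - k) * x) = if j = k then 2 * A else 0 := by
    split_ifs with hjk
    · subst hjk
      simp only [sub_self, mul_zero, zero_mul, Real.cos_zero, intervalIntegral.integral_const,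
        smul_eq_mul, mul_one]
      ring
    · have hc : ω * (j - k) ≠ 0 := mul_ne_zero hω (sub_ne_zero.2 (by exact_mod_cast hjk))
      have hs := hA (j - k)
      push_cast at hs
      rw [intervalIntegral.integral_comp_mul_left (fun x => Real.cos x) hc, integral_cos,
        mul_neg, Real.sin_neg, hs, neg_zero, sub_zero, smul_zero]
  have hcont (j k : ℕ) : Continuous fun x => Real.cos (ω * (j - k) * x) := by fun_prop
  simp only [eq_sum_cos]
  rw [intervalIntegral.integral_finsetSum fun j _ =>
    (continuous_finsetSum _ fun k _ => hcont j k).intervalIntegrable _ _]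
  simp only [intervalIntegral.integral_finsetSum fun k _ => (hcont _ k).intervalIntegrable _ _,
    hcos, Finset.sum_ite_eq, Finset.mem_range]
  rw [Finset.sum_ite_of_true fun j hj => Finset.mem_range.1 hj, Finset.sum_const,
    Finset.card_range, nsmul_eq_mul]
  ring

variable {h : ℝ}

theorem integral_symm_int_mul (hh : 0 < h) (k : ℤ) :
    ∫ x in (-(k * h))..(k * h), fejerKernel (π / h) N x = 2 * (k * h) * N :=
  integral_symm _ N (div_ne_zero Real.pi_ne_zero hh.ne') fun m => by
    rw [show π / h * m * (k * h) = (m * k : ℤ) * π by push_cast; field_simp, Real.sin_int_mul_pi]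

theorem le_of_le_abs (hh : 1 / 2 < h) {x : ℝ} (hx : h ≤ |x|) (hx1 : |x| ≤ 1) :
    fejerKernel (π / h) N x ≤ 1 / Real.sin (π / (2 * h)) ^ 2 := by
  have hh0 : 0 < h := by linarith
  have habs : fejerKernel (π / h) N |x| = fejerKernel (π / h) N x := by
    rcases abs_choice x with hx' | hx' <;> rw [hx']
    exact (isPosDefR1 _ N).apply_neg x
  have hθ : π / 2 ≤ π / h * |x| / 2 := by
    rw [div_mul_eq_mul_div, le_div_iff₀ two_pos, div_mul_cancel₀ _ two_ne_zero, le_div_iff₀ hh0]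
    nlinarith [Real.pi_pos]
  have hθ' : π / h * |x| / 2 ≤ π / (2 * h) := by
    rw [div_mul_eq_mul_div, div_div, mul_comm h]
    gcongr
    exact mul_le_of_le_one_right Real.pi_pos.le hx1
  have hlt : π / (2 * h) < π := by
    rw [div_lt_iff₀ (by positivity)]
    nlinarith [Real.pi_pos]
  have hsin : Real.sin (π / (2 * h)) ≤ Real.sin (π / h * |x| / 2) := by
    rw [← Real.sin_pi_sub, ← Real.sin_pi_sub (π / h * |x| / 2)]
    exact Real.sin_le_sin_of_le_of_le_pi_div_two (by linarith) (by linarith) (by linarith)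
  have hpos : 0 < Real.sin (π / (2 * h)) := Real.sin_pos_of_pos_of_lt_pi (by positivity) hlt
  rw [← habs]
  calc fejerKernel (π / h) N |x| ≤ 1 / Real.sin (π / h * |x| / 2) ^ 2 :=
        le_inv_sin_sq _ N (hpos.trans_le hsin).ne'
    _ ≤ 1 / Real.sin (π / (2 * h)) ^ 2 := by gcongr

theorem integral_le (hh : 1 / 2 < h) (hh1 : h ≤ 1) :
    ∫ x in (-1 : ℝ)..1, fejerKernel (π / h) N x ≤
      2 * h * N + 2 * (1 - h) * (1 / Real.sin (π / (2 * h)) ^ 2) := by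
  set C := 1 / Real.sin (π / (2 * h)) ^ 2
  have hint (a b : ℝ) := (continuous (π / h) N).intervalIntegrable (μ := volume) a b
  have htail {a b : ℝ} (hab : a ≤ b) (hC : ∀ x ∈ Set.Icc a b, fejerKernel (π / h) N x ≤ C) :
      ∫ x in a..b, fejerKernel (π / h) N x ≤ (b - a) * C := by
    simpa using intervalIntegral.integral_mono_on hab (hint a b) intervalIntegrable_const hC
  have hleft := htail (a := -1) (b := -h) (by linarith) fun x ⟨hx1, hx2⟩ =>
    le_of_le_abs N hh (by rw [abs_of_neg (by linarith)]; linarith) (abs_le.2 ⟨hx1, by linarith⟩)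
  have hright := htail (a := h) (b := 1) hh1 fun x ⟨hx1, hx2⟩ =>
    le_of_le_abs N hh (by rw [abs_of_pos (by linarith)]; linarith) (abs_le.2 ⟨by linarith, hx2⟩)
  have hmid := integral_symm_int_mul N (show 0 < h by linarith) 1
  rw [Int.cast_one, one_mul] at hmid
  rw [← intervalIntegral.integral_add_adjacent_intervals (hint (-1) (-h)) (hint (-h) 1),
    ← intervalIntegral.integral_add_adjacent_intervals (hint (-h) h) (hint h 1), hmid]
  linarith

theorem le_integral (hh : 0 < h) (hh1 : h ≤ 1) :
    2 * h * N ≤ ∫ x in (-1 : ℝ)..1, fejerKernel (π / h) N x := by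
  have hmid := integral_symm_int_mul N hh 1
  rw [Int.cast_one, one_mul] at hmid
  rw [← hmid]
  exact intervalIntegral.integral_mono_interval (by linarith) (by linarith) hh1
    (ae_of_all _ (nonneg _ N)) ((continuous _ N).intervalIntegrable _ _)

end fejerKernel

theorem integral_Icc_eq_intervalIntegral (f : ℝ → ℝ) {a b : ℝ} (hab : a ≤ b) :
    ∫ x in Set.Icc a b, f x = ∫ x in a..b, f x := by
  rw [integral_Icc_eq_integral_Ioc, intervalIntegral.integral_of_le hab]

theorem inv_volume_mul_integral_Icc_neg (f : ℝ → ℝ) {a : ℝ} (ha : 0 ≤ a) :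
    (volume (Set.Icc (-a) a)).toReal⁻¹ * ∫ x in Set.Icc (-a) a, f x =
      (2 * a)⁻¹ * ∫ x in (-a)..a, f x := by
  rw [Real.volume_Icc, ENNReal.toReal_ofReal (by linarith),
    integral_Icc_eq_intervalIntegral f (by linarith), sub_neg_eq_add, two_mul]

theorem le_of_mem_ratioSet1_Icc {r : ℕ} (hr : 1 ≤ r) {c : ℝ}
    (hmem : c ∈ ratioSet1 (Set.Icc (-1 : ℝ) 1) (Set.Icc (-(r : ℝ)) (r : ℝ))) :
    c ≤ 2 + 1 / r := by
  obtain ⟨f, hc, h0, hf, -, hpos, rfl⟩ := hmem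
  have hr' : (0 : ℝ) < r := by exact_mod_cast hr
  rw [integral_Icc_eq_intervalIntegral f (by norm_num)] at hpos
  rw [inv_volume_mul_integral_Icc_neg f zero_le_one, inv_volume_mul_integral_Icc_neg f hr'.le,
    div_le_iff₀ (by positivity)]
  calc (2 * (r : ℝ))⁻¹ * ∫ x in (-(r : ℝ))..r, f x
      ≤ (2 * (r : ℝ))⁻¹ * ((2 * r + 1) * ∫ x in (-1 : ℝ)..1, f x) := by
        gcongr
        exact hf.integral_le hc h0 r
    _ = (2 + 1 / r) * ((2 * 1)⁻¹ * ∫ x in (-1 : ℝ)..1, f x) := by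
        field_simp

namespace fejerKernel

variable {h : ℝ} {N : ℕ}

theorem integral_pos (hh : 0 < h) (hh1 : h ≤ 1) (hN : 0 < N) :
    0 < ∫ x in (-1 : ℝ)..1, fejerKernel (π / h) N x :=
  (by positivity : (0 : ℝ) < 2 * h * N).trans_le (le_integral N hh hh1)

theorem mem_ratioSet1 (hh : 0 < h) (hh1 : h ≤ 1) {A : ℝ} (hA : 0 < A) (k : ℤ) (hk : k * h = A)
    (hN : 0 < N) :
    2 * N / ∫ x in (-1 : ℝ)..1, fejerKernel (π / h) N x ∈
      ratioSet1 (Set.Icc (-1 : ℝ) 1) (Set.Icc (-A) A) := by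
  have hI := integral_pos hh hh1 hN
  refine ⟨fejerKernel (π / h) N, continuous _ N, nonneg _ N, isPosDefR1 _ N,
    fun h0 => hI.ne' (by simp [h0]), ?_, ?_⟩
  · rwa [integral_Icc_eq_intervalIntegral _ (by norm_num)]
  · rw [inv_volume_mul_integral_Icc_neg _ zero_le_one, inv_volume_mul_integral_Icc_neg _ hA.le,
      ← hk, integral_symm_int_mul N hh k, hk]
    field_simp

theorem tendsto_ratio (hh : 1 / 2 < h) (hh1 : h ≤ 1) :
    Tendsto (fun N : ℕ => 2 * N / ∫ x in (-1 : ℝ)..1, fejerKernel (π / h) N x) atTop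
      (𝓝 (1 / h)) := by
  have hh0 : 0 < h := by linarith
  set D := 2 * (1 - h) * (1 / Real.sin (π / (2 * h)) ^ 2)
  have hD : 0 ≤ D := mul_nonneg (by linarith) (by positivity)
  have hlim : Tendsto (fun N : ℕ => 1 / (h + D / N)) atTop (𝓝 (1 / h)) := by
    simpa using (tendsto_const_nhds.add (tendsto_const_div_atTop_nhds_zero_nat D)).inv₀
      (by rw [add_zero]; exact hh0.ne')
  refine tendsto_of_tendsto_of_tendsto_of_le_of_le' hlim tendsto_const_nhds ?_ ?_
    <;> filter_upwards [eventually_gt_atTop 0] with N hN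
  · have hDN : 2 * (N : ℝ) * (D / N) = 2 * D := by field_simp
    rw [div_le_div_iff₀ (by positivity) (integral_pos hh0 hh1 hN), one_mul, mul_add, hDN]
    linarith [integral_le N hh hh1]
  · rw [div_le_div_iff₀ (integral_pos hh0 hh1 hN) hh0]
    linarith [le_integral N hh0 hh1]

end fejerKernel

/-- For `r ∈ ℕ`, `r ≥ 1`, the sharp constant `C_1([-1,1],[-r,r])` satisfies
`2 - 1/r ≤ C_1 ≤ 2 + 1/r`. -/
theorem one_dim_sharp_constant_bounds (r : ℕ) (hr : 1 ≤ r) :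
    2 - 1 / (r : ℝ) ≤
      doublingConst1 (Set.Icc (-1 : ℝ) 1) (Set.Icc (-(r : ℝ)) (r : ℝ)) ∧
    doublingConst1 (Set.Icc (-1 : ℝ) 1) (Set.Icc (-(r : ℝ)) (r : ℝ)) ≤
      2 + 1 / (r : ℝ) := by
  have hle (c : ℝ) (hc : c ∈ ratioSet1 (Set.Icc (-1 : ℝ) 1) (Set.Icc (-(r : ℝ)) (r : ℝ))) :
      c ≤ 2 + 1 / r :=
    le_of_mem_ratioSet1_Icc hr hc
  have hr' : (1 : ℝ) ≤ r := by exact_mod_cast hr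
  set h : ℝ := r / (2 * r - 1)
  have hh : 1 / 2 < h := by rw [lt_div_iff₀ (by linarith)]; linarith
  have hh1 : h ≤ 1 := by rw [div_le_one (by linarith)]; linarith
  have hrh : (2 * r - 1) * h = r := mul_div_cancel₀ _ (by linarith)
  refine ⟨?_, Real.sSup_le hle (by positivity)⟩
  rw [show 2 - 1 / (r : ℝ) = 1 / h by field_simp; linarith]
  refine le_of_tendsto (fejerKernel.tendsto_ratio hh hh1) ?_
  filter_upwards [eventually_gt_atTop 0] with N hN
  exact le_csSup ⟨_, hle⟩ (fejerKernel.mem_ratioSet1 (by linarith) hh1 (by linarith) (2 * r - 1)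
    (by push_cast; exact hrh) hN)
end
end

section
/- Let H ⊂ ℝⁿ be a 0-symmetric convex body, X a finite set, and V ⊂ ℝⁿ a set with V + H ⊆ H + X. Then the function S(x) = |X|⁻¹ ∑_{a∈X} φ_H(x-a), where φ_H = |H|⁻¹ χ_H * χ_H, satisfies S(x) ≥ 1/|X| for every x ∈ V. -/
/-!
Since `χ_H * χ_H (z) = |H ∩ (z - H)|`, the claim `∑_{a∈X} φ_H(x - a) ≥ 1` says that the sets
`H ∩ (x - a - H)`, `a ∈ X`, have total measure at least `|H|`. They in fact cover `H`: for `y ∈ H`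
we have `x - y ∈ x + H ⊆ H + X` by symmetry of `H`, i.e. `x - a - y ∈ H` for some `a ∈ X`.
-/

open MeasureTheory Complex Pointwise

noncomputable section

/-- The normalized self-convolution of the indicator of `H`. -/
def phi {n : ℕ} (H : Set (Fin n → ℝ)) : (Fin n → ℝ) → ℝ := fun x =>
  (volume H).toReal⁻¹ *
    ∫ y, Set.indicator H (fun _ => (1 : ℝ)) (x - y) *
         Set.indicator H (fun _ => (1 : ℝ)) y

theorem phi_eq_measureReal_inter {n : ℕ} {H : Set (Fin n → ℝ)} (hH : MeasurableSet H)
    (z : Fin n → ℝ) :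
    phi H z = (volume H).toReal⁻¹ * volume.real (H ∩ (fun y => z - y) ⁻¹' H) := by
  have hpre : MeasurableSet ((fun y => z - y) ⁻¹' H) :=
    hH.preimage (measurable_const.sub measurable_id)
  rw [phi, ← integral_indicator_one (hH.inter hpre), Set.inter_indicator_one]
  congr 1
  refine integral_congr_ae (Filter.Eventually.of_forall fun y => ?_)
  exact mul_comm _ _

theorem subset_biUnion_inter_preimage_sub {G : Type*} [AddCommGroup G] {H X : Set G} {x : G}
    (hneg : H ⊆ -H) (hcov : {x} + H ⊆ H + X) :
    H ⊆ ⋃ a ∈ X, H ∩ (fun y => x - a - y) ⁻¹' H := by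
  intro y hy
  obtain ⟨u, hu, a, ha, hua⟩ := hcov (Set.add_mem_add rfl (hneg hy))
  refine Set.mem_biUnion ha ⟨hy, ?_⟩
  have : x - a - y = u := by rw [eq_sub_of_add_eq hua]; abel
  simpa [this] using hu

theorem one_le_sum_phi {n : ℕ} {H : Set (Fin n → ℝ)} (hH : MeasurableSet H)
    (hfin : volume H ≠ ⊤) (hpos : volume H ≠ 0) (hneg : H ⊆ -H)
    {X : Finset (Fin n → ℝ)} {x : Fin n → ℝ} (hcov : {x} + H ⊆ H + (X : Set (Fin n → ℝ))) :
    1 ≤ ∑ a ∈ X, phi H (x - a) := by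
  have hvol : 0 < (volume H).toReal := ENNReal.toReal_pos hpos hfin
  have hcover : volume.real H ≤ ∑ a ∈ X, volume.real (H ∩ (fun y => x - a - y) ⁻¹' H) :=
    calc volume.real H ≤ volume.real (⋃ a ∈ X, H ∩ (fun y => x - a - y) ⁻¹' H) :=
          measureReal_mono (subset_biUnion_inter_preimage_sub hneg hcov)
            (measure_ne_top_of_subset (by simp) hfin)
      _ ≤ _ := measureReal_biUnion_finset_le _ _
  simp only [phi_eq_measureReal_inter hH, ← Finset.mul_sum]
  rw [← inv_mul_cancel₀ hvol.ne']
  exact mul_le_mul_of_nonneg_left hcover (inv_nonneg.mpr hvol.le)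

/-- If `V + H ⊆ H + X` then `S(x) = |X|⁻¹ ∑_{a∈X} φ_H(x-a) ≥ 1/|X|` on `V`. -/
theorem shifted_sum_lower_bound {n : ℕ} (H : Set (Fin n → ℝ))
    (hH : IsSymConvexBody H) (X : Finset (Fin n → ℝ)) (V : Set (Fin n → ℝ))
    (hcov : V + H ⊆ H + (X : Set (Fin n → ℝ))) :
    ∀ x ∈ V, 1 / (X.card : ℝ) ≤ (X.card : ℝ)⁻¹ * ∑ a ∈ X, phi H (x - a) := by
  intro x hx
  obtain ⟨-, hcomp, hint, hsym⟩ := hH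
  have hpos : volume H ≠ 0 :=
    ((isOpen_interior.measure_pos volume hint).trans_le (measure_mono interior_subset)).ne'
  have hsum : 1 ≤ ∑ a ∈ X, phi H (x - a) :=
    one_le_sum_phi hcomp.isClosed.measurableSet hcomp.measure_lt_top.ne hpos hsym.le
      ((Set.add_subset_add_right (Set.singleton_subset_iff.mpr hx)).trans hcov)
  rw [one_div]
  exact le_mul_of_one_le_right (inv_nonneg.mpr X.card.cast_nonneg) hsum
end
end

section
/- There exists a nonzero continuous non-negative positive definite function f : ℝ → ℝ and a point x₀ ≠ 0 such that f vanishes identically on a ball centered at x₀; hence the doubling property ∫_{B(x₀,2R)} f ≤ C ∫_{B(x₀,R)} f fails at points other than the origin for any constant C. -/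
open MeasureTheory Complex Pointwise

noncomputable section

/-! The tent `max (1 - |x|) 0` is the autocorrelation of the indicator of a unit interval:
`tent (a - b) = ⟪𝟙_[b, b+1], 𝟙_[a, a+1]⟫` in `L²(ℝ)`, so its quadratic form at `c` is
`‖∑ c_a 𝟙_[a, a+1]‖² ≥ 0`. It vanishes on `B(2, 1)` but not on `B(2, 2) ∋ 1/2`, so at `x₀ = 2`
the doubling inequality with `R = 1` would bound a positive integral by `C * 0`. -/

open InnerProductSpace in
theorem isPosDefC1_of_eq_inner {E : Type*} [NormedAddCommGroup E] [InnerProductSpace ℂ E]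
    {f : ℝ → ℂ} (v : ℝ → E) (hf : ∀ a b, f (a - b) = ⟪v b, v a⟫_ℂ) : IsPosDefC1 f := by
  intro X c
  set w := ∑ a ∈ X, c a • v a
  have hgram : ∑ a ∈ X, ∑ b ∈ X, c a * (starRingEnd ℂ) (c b) * f (a - b) = ⟪w, w⟫_ℂ := by
    simp only [w, inner_sum, sum_inner, inner_smul_left, inner_smul_right, Finset.mul_sum, hf]
    exact Finset.sum_congr rfl fun a _ => Finset.sum_congr rfl fun b _ => by ring
  rw [hgram]
  exact ⟨inner_self_nonneg (𝕜 := ℂ), inner_self_im (𝕜 := ℂ) w⟩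

def tent (x : ℝ) : ℝ := max (1 - |x|) 0

theorem tent_nonneg (x : ℝ) : 0 ≤ tent x := le_max_right _ _

theorem continuous_tent : Continuous tent :=
  (continuous_const.sub continuous_abs).max continuous_const

theorem tent_zero : tent 0 = 1 := by simp [tent]

theorem tent_eq_zero_of_one_le_abs {x : ℝ} (hx : 1 ≤ |x|) : tent x = 0 :=
  max_eq_right (by linarith)

theorem tent_sub_eq_volume_real_inter (a b : ℝ) :
    tent (a - b) = volume.real (Set.Icc b (b + 1) ∩ Set.Icc a (a + 1)) := by
  rw [Set.Icc_inter_Icc, min_add_add_right, Real.volume_real_Icc, tent,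
    ← max_sub_min_eq_abs, max_comm b a]
  ring_nf

theorem isPosDefR1_tent : IsPosDefR1 tent := by
  refine isPosDefC1_of_eq_inner (fun a => indicatorConstLp 2
    (measurableSet_Icc (a := a) (b := a + 1)) (measure_Icc_lt_top (μ := volume)).ne (1 : ℂ))
    fun a b => ?_
  rw [L2.inner_indicatorConstLp_one_indicatorConstLp_one _ _ measure_Icc_lt_top.ne
    measure_Icc_lt_top.ne, tent_sub_eq_volume_real_inter]
  rfl

theorem setIntegral_pos_of_continuous_of_nonneg {X : Type*} [TopologicalSpace X]
    [MeasurableSpace X] [OpensMeasurableSpace X] {μ : Measure X} [μ.IsOpenPosMeasure]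
    {f : X → ℝ} {U : Set X} {x : X} (hf : Continuous f) (hf_nonneg : ∀ y, 0 ≤ f y)
    (hU : IsOpen U) (hfU : IntegrableOn f U μ) (hxU : x ∈ U) (hx : f x ≠ 0) :
    0 < ∫ y in U, f y ∂μ := by
  rw [setIntegral_pos_iff_support_of_nonneg_ae (ae_of_all _ hf_nonneg) hfU]
  exact (hf.isOpen_support.inter hU).measure_pos μ ⟨x, hx, hxU⟩

/-- There is a nonzero continuous non-negative positive definite `f : ℝ → ℝ`
vanishing on a ball centred at some `x₀ ≠ 0`, for which the doubling property
at `x₀` fails for every constant `C`. -/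
theorem doubling_fails_off_origin :
    ∃ (f : ℝ → ℝ) (x₀ ε : ℝ), x₀ ≠ 0 ∧ 0 < ε ∧
      Continuous f ∧ (∀ x, 0 ≤ f x) ∧ IsPosDefR1 f ∧ f ≠ 0 ∧
      (∀ x ∈ Metric.ball x₀ ε, f x = 0) ∧
      ∀ C : ℝ, ∃ R > 0,
        ¬ (∫ x in Metric.ball x₀ (2 * R), f x ≤ C * ∫ x in Metric.ball x₀ R, f x) := by
  have hvanish : ∀ x ∈ Metric.ball (2 : ℝ) 1, tent x = 0 := fun x hx => by
    rw [Real.ball_eq_Ioo, Set.mem_Ioo] at hx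
    exact tent_eq_zero_of_one_le_abs (le_abs.2 (Or.inl (by linarith)))
  refine ⟨tent, 2, 1, two_ne_zero, one_pos, continuous_tent, tent_nonneg, isPosDefR1_tent,
    fun h => by simpa [tent_zero] using congrFun h 0, hvanish, fun C => ⟨1, one_pos, ?_⟩⟩
  rw [setIntegral_eq_zero_of_forall_eq_zero hvanish, mul_zero, mul_one, not_le]
  refine setIntegral_pos_of_continuous_of_nonneg (x := 2⁻¹) continuous_tent tent_nonneg
    Metric.isOpen_ball ?_ ?_ ?_
  · exact (continuous_tent.continuousOn.integrableOn_compact (isCompact_closedBall _ _)).mono_set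
      Metric.ball_subset_closedBall
  · rw [Real.ball_eq_Ioo]; norm_num
  · norm_num [tent, abs_of_pos]
end
end
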